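/- Under the Setup and Assumptions (A1), (A2), (A3), for any λ ≥ 0 the β-gradient of the Lyapunov function, D_β(β,θ) = ∫ ∇_β F(x,β) ∇g(F(x,β)) μ(dx) + ∫ ∇_β F(x,β)(∇g(F(x,β)) − ∇g(Ψ(x,θ))) μ(dx) + λ∫ ∇_β F(x,β)(F(x,β) − Ψ(x,θ)) μ(dx), is Lipschitz continuous on ℝ^{n_β} × ℝ^{n_θ} with constant L_{W_β} = L̄_f² L_{∇g} + L_g L̄_{∇f} + ( L̄_f² L_{∇g} + 2 L_g L̄_{∇f} + L̄_f L_{∇g} L̄_Ψ ) + λ ( L̄_f² + L̄_{∇f} C_f + L̄_{∇f} C_Ψ + L̄_f L̄_Ψ ); that is, ‖D_β(u,s) − D_β(v,t)‖ ≤ L_{W_β} ‖(u,s) − (v,t)‖ for all u, v ∈ ℝ^{n_β} and s, t ∈ ℝ^{n_θ}. -/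

import Mathlib

open MeasureTheory ProbabilityTheory RealInnerProductSpace

noncomputable section

/-- Euclidean space `ℝ^n`. -/
abbrev E (n : ℕ) : Type := EuclideanSpace ℝ (Fin n)

/-- The transposed Jacobian (gradient matrix) of `φ` at `x`, acting as a linear map. -/
noncomputable def tJac {n m : ℕ} (φ : E n → E m) (x : E n) : E m →L[ℝ] E n :=
  ContinuousLinearMap.adjoint (fderiv ℝ φ x)

/-- `F(x,β) = ∫ f(x,y,β) κ(x)(dy)`, the conditional expectation model. -/
noncomputable def condF {nX nY nb nf : ℕ} (κ : Kernel (E nX) (E nY))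
    (f : E nX → E nY → E nb → E nf) (x : E nX) (β : E nb) : E nf :=
  ∫ y, f x y β ∂(κ x)

/-- `∇_β F(x,β) = ∫ ∇_β f(x,y,β) κ(x)(dy)`, the transposed Jacobian of the
conditional expectation model. -/
noncomputable def DF {nX nY nb nf : ℕ} (κ : Kernel (E nX) (E nY))
    (f : E nX → E nY → E nb → E nf) (x : E nX) (β : E nb) : E nf →L[ℝ] E nb :=
  ∫ y, tJac (f x y) β ∂(κ x)

/-- `∇G(β) = ∫ ∇_β F(x,β) ∇g(F(x,β)) μ(dx)`. -/
noncomputable def gradG {nX nY nb nf : ℕ} (μ : Measure (E nX)) (κ : Kernel (E nX) (E nY))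
    (f : E nX → E nY → E nb → E nf) (g : E nf → ℝ) (β : E nb) : E nb :=
  ∫ x, DF κ f x β (gradient g (condF κ f x β)) ∂μ

/-- The β-gradient `D_β(β,θ)` of the Lyapunov function `W`. -/
noncomputable def Dbeta {nX nY nb nt nf : ℕ} (μ : Measure (E nX)) (κ : Kernel (E nX) (E nY))
    (f : E nX → E nY → E nb → E nf) (Ψ : E nX → E nt → E nf) (g : E nf → ℝ) (lam : ℝ)
    (β : E nb) (θ : E nt) : E nb :=
  gradG μ κ f g β
  + (∫ x, DF κ f x β (gradient g (condF κ f x β) - gradient g (Ψ x θ)) ∂μ)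
  + lam • ∫ x, DF κ f x β (condF κ f x β - Ψ x θ) ∂μ

/-!
Each summand of `D_β(β,θ)` is `∫ A_β(x) w_{β,θ}(x) μ(dx)` with `A_β = ∇_β F(·,β)`, and
`A_u w_u - A_v w_v = (A_u - A_v) w_u + A_v (w_u - w_v)`. Integrating (A2) against `κ(x)` gives
`‖A_β‖ ≤ Λ`, `‖A_u - A_v‖ ≤ Δ ‖u - v‖` and `‖F(·,u) - F(·,v)‖ ≤ Λ ‖u - v‖`, where `Λ`, `Δ` are the
`κ`-averages of `L_f`, `L_{∇f}`; by Jensen their `L²(μ)` norms are at most `L̄_f`, `L̄_{∇f}`.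
(A1) and (A3) bound `w` and its increments by `L²(μ)` functions, so Cauchy–Schwarz in `L²(μ)`
yields `‖D_β(u,s) - D_β(v,t)‖ ≤ a ‖u - v‖ + b ‖s - t‖ ≤ (a + b) ‖(u,s) - (v,t)‖`.
-/

lemma norm_tJac {n m : ℕ} (φ : E n → E m) (x : E n) : ‖tJac φ x‖ = ‖fderiv ℝ φ x‖ :=
  LinearIsometryEquiv.norm_map ContinuousLinearMap.adjoint _

lemma norm_sub_le_of_norm_tJac_le {n m : ℕ} {φ : E n → E m} (hφ : Differentiable ℝ φ) {L : ℝ}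
    (hL : ∀ x, ‖tJac φ x‖ ≤ L) (x y : E n) : ‖φ x - φ y‖ ≤ L * ‖x - y‖ :=
  convex_univ.norm_image_sub_le_of_norm_fderiv_le (fun z _ => hφ z)
    (fun z _ => norm_tJac φ z ▸ hL z) (Set.mem_univ y) (Set.mem_univ x)

section Gradient

variable {F : Type*} [NormedAddCommGroup F] [InnerProductSpace ℝ F] [CompleteSpace F]
  {g : F → ℝ}

lemma ContDiff.differentiable_gradient (hg : ContDiff ℝ 2 g) : Differentiable ℝ (gradient g) := by
  show Differentiable ℝ fun x => (InnerProductSpace.toDual ℝ F).symm (fderiv ℝ g x)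
  exact (InnerProductSpace.toDual ℝ F).symm.differentiable.comp
    ((hg.fderiv_right (by norm_num)).differentiable one_ne_zero)

lemma norm_gradient_sub_le (hg : ContDiff ℝ 2 g) {L : ℝ}
    (hL : ∀ x, ‖fderiv ℝ (gradient g) x‖ ≤ L) (x y : F) :
    ‖gradient g x - gradient g y‖ ≤ L * ‖x - y‖ :=
  convex_univ.norm_image_sub_le_of_norm_fderiv_le (fun z _ => hg.differentiable_gradient z)
    (fun z _ => hL z) (Set.mem_univ y) (Set.mem_univ x)

end Gradient

section SecondMoment

variable {α : Type*} [MeasurableSpace α] {μ : Measure α}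

structure SecondMomentLE (μ : Measure α) (a : α → ℝ) (A : ℝ) : Prop where
  bound_nonneg : 0 ≤ A
  nonneg : ∀ x, 0 ≤ a x
  aestronglyMeasurable : AEStronglyMeasurable a μ
  integrable_sq : Integrable (fun x => a x ^ 2) μ
  integral_sq_le : ∫ x, a x ^ 2 ∂μ ≤ A ^ 2

namespace SecondMomentLE

variable {a b : α → ℝ} {A B : ℝ}

lemma memLp_two (ha : SecondMomentLE μ a A) : MemLp a 2 μ :=
  (memLp_two_iff_integrable_sq ha.aestronglyMeasurable).2 ha.integrable_sq

lemma integrable [IsFiniteMeasure μ] (ha : SecondMomentLE μ a A) : Integrable a μ :=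
  ha.memLp_two.integrable one_le_two

lemma integrable_mul (ha : SecondMomentLE μ a A) (hb : SecondMomentLE μ b B) :
    Integrable (fun x => a x * b x) μ :=
  ha.memLp_two.integrable_mul hb.memLp_two

lemma integral_mul_le (ha : SecondMomentLE μ a A) (hb : SecondMomentLE μ b B) :
    ∫ x, a x * b x ∂μ ≤ A * B := by
  have hL2 : ∀ {c : α → ℝ} {C : ℝ}, SecondMomentLE μ c C →
      (∫ x, c x ^ (2 : ℝ) ∂μ) ^ (1 / (2 : ℝ)) ≤ C := fun hc => by
    simp_rw [Real.rpow_two, ← Real.sqrt_eq_rpow]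
    exact Real.sqrt_le_iff.2 ⟨hc.bound_nonneg, hc.integral_sq_le⟩
  calc ∫ x, a x * b x ∂μ
      ≤ (∫ x, a x ^ (2 : ℝ) ∂μ) ^ (1 / (2 : ℝ)) * (∫ x, b x ^ (2 : ℝ) ∂μ) ^ (1 / (2 : ℝ)) :=
        integral_mul_le_Lp_mul_Lq_of_nonneg Real.HolderConjugate.two_two (ae_of_all _ ha.nonneg)
          (ae_of_all _ hb.nonneg) (by simpa using ha.memLp_two) (by simpa using hb.memLp_two)
    _ ≤ A * B := mul_le_mul (hL2 ha) (hL2 hb)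
        (Real.rpow_nonneg (integral_nonneg fun x => Real.rpow_nonneg (hb.nonneg x) _) _)
        ha.bound_nonneg

lemma const [IsProbabilityMeasure μ] {c : ℝ} (hc : 0 ≤ c) :
    SecondMomentLE μ (fun _ => c) c :=
  ⟨hc, fun _ => hc, aestronglyMeasurable_const, integrable_const _, by simp⟩

lemma const_mul (ha : SecondMomentLE μ a A) {c : ℝ} (hc : 0 ≤ c) :
    SecondMomentLE μ (fun x => c * a x) (c * A) where
  bound_nonneg := mul_nonneg hc ha.bound_nonneg
  nonneg x := mul_nonneg hc (ha.nonneg x)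
  aestronglyMeasurable := ha.aestronglyMeasurable.const_mul c
  integrable_sq := by simpa only [mul_pow] using ha.integrable_sq.const_mul (c ^ 2)
  integral_sq_le := by
    simp only [mul_pow, integral_const_mul]
    exact mul_le_mul_of_nonneg_left ha.integral_sq_le (sq_nonneg c)

lemma add (ha : SecondMomentLE μ a A) (hb : SecondMomentLE μ b B) :
    SecondMomentLE μ (fun x => a x + b x) (A + B) where
  bound_nonneg := add_nonneg ha.bound_nonneg hb.bound_nonneg
  nonneg x := add_nonneg (ha.nonneg x) (hb.nonneg x)
  aestronglyMeasurable := ha.aestronglyMeasurable.add hb.aestronglyMeasurable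
  integrable_sq := by
    simp only [add_sq, mul_assoc]
    exact (ha.integrable_sq.add ((ha.integrable_mul hb).const_mul 2)).add hb.integrable_sq
  integral_sq_le := by
    have hab := (ha.integrable_mul hb).const_mul 2
    simp only [add_sq, mul_assoc]
    rw [integral_add (by exact ha.integrable_sq.add hab) hb.integrable_sq,
      integral_add ha.integrable_sq hab, integral_const_mul]
    nlinarith [ha.integral_sq_le, hb.integral_sq_le, ha.integral_mul_le hb]

end SecondMomentLE

end SecondMoment

lemma sq_integral_le_integral_sq {β : Type*} [MeasurableSpace β] {ν : Measure β}
    [IsProbabilityMeasure ν] {a : β → ℝ} (ha : MemLp a 2 ν) :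
    (∫ y, a y ∂ν) ^ 2 ≤ ∫ y, a y ^ 2 ∂ν :=
  sub_nonneg.1 (variance_eq_sub ha ▸ variance_nonneg a ν)

lemma MeasureTheory.Integrable.ae_integrable_compProd {α β G : Type*} [MeasurableSpace α]
    [MeasurableSpace β] [NormedAddCommGroup G] {μ : Measure α} [SFinite μ] {κ : Kernel α β}
    [IsSFiniteKernel κ] {h : α × β → G} (hh : Integrable h (μ ⊗ₘ κ)) :
    ∀ᵐ x ∂μ, Integrable (fun y => h (x, y)) (κ x) :=
  ((Measure.integrable_compProd_iff hh.1).1 hh).1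

lemma MeasureTheory.AEStronglyMeasurable.integral_measure_compProd {α β G : Type*}
    [MeasurableSpace α] [MeasurableSpace β] [NormedAddCommGroup G] [NormedSpace ℝ G]
    {μ : Measure α} [SFinite μ] {κ : Kernel α β} [IsSFiniteKernel κ] {h : α × β → G}
    (hh : AEStronglyMeasurable h (μ ⊗ₘ κ)) :
    AEStronglyMeasurable (fun x => ∫ y, h (x, y) ∂κ x) μ := by
  rw [Measure.compProd] at hh
  simpa using hh.integral_kernel_compProd

lemma SecondMomentLE.integral_kernel {α β : Type*} [MeasurableSpace α] [MeasurableSpace β]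
    {μ : Measure α} [SFinite μ] {κ : Kernel α β} [IsMarkovKernel κ] {h : α × β → ℝ} {C : ℝ}
    (hh : SecondMomentLE (μ ⊗ₘ κ) h C) :
    SecondMomentLE μ (fun x => ∫ y, h (x, y) ∂κ x) C := by
  obtain ⟨hsq_slice, hsq_int⟩ :=
    (Measure.integrable_compProd_iff hh.integrable_sq.1).1 hh.integrable_sq
  simp only [Real.norm_of_nonneg (sq_nonneg _)] at hsq_int
  have hslice : ∀ᵐ x ∂μ, AEStronglyMeasurable (fun y => h (x, y)) (κ x) :=
    hh.aestronglyMeasurable.ae_of_compProd (f := fun x y => h (x, y))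
  have hjensen : ∀ᵐ x ∂μ, (∫ y, h (x, y) ∂κ x) ^ 2 ≤ ∫ y, h (x, y) ^ 2 ∂κ x := by
    filter_upwards [hsq_slice, hslice] with x hx hxm
    exact sq_integral_le_integral_sq ((memLp_two_iff_integrable_sq hxm).2 hx)
  have hm := hh.aestronglyMeasurable.integral_measure_compProd
  have hint : Integrable (fun x => (∫ y, h (x, y) ∂κ x) ^ 2) μ :=
    hsq_int.mono' (hm.pow 2) (by
      filter_upwards [hjensen] with x hx
      rwa [Real.norm_of_nonneg (sq_nonneg _)])
  refine ⟨hh.bound_nonneg, fun x => integral_nonneg fun y => hh.nonneg _, hm, hint, ?_⟩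
  calc ∫ x, (∫ y, h (x, y) ∂κ x) ^ 2 ∂μ ≤ ∫ x, ∫ y, h (x, y) ^ 2 ∂κ x ∂μ :=
        integral_mono_ae hint hsq_int hjensen
    _ = ∫ z, h z ^ 2 ∂(μ ⊗ₘ κ) := (Measure.integral_compProd hh.integrable_sq).symm
    _ ≤ C ^ 2 := hh.integral_sq_le

section Bilinear

variable {α V W : Type*} [MeasurableSpace α] {μ : Measure α}
  [NormedAddCommGroup V] [NormedSpace ℝ V] [NormedAddCommGroup W] [NormedSpace ℝ W]

lemma integrable_apply_of_norm_le {A : α → V →L[ℝ] W} {p : α → V} {Λ P : α → ℝ}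
    (hAm : AEStronglyMeasurable A μ) (hpm : AEStronglyMeasurable p μ)
    (hA : ∀ᵐ x ∂μ, ‖A x‖ ≤ Λ x) (hp : ∀ᵐ x ∂μ, ‖p x‖ ≤ P x)
    (hΛP : Integrable (fun x => Λ x * P x) μ) :
    Integrable (fun x => A x (p x)) μ := by
  refine hΛP.mono'
    (isBoundedBilinearMap_apply.continuous.comp_aestronglyMeasurable (hAm.prodMk hpm)) ?_
  filter_upwards [hA, hp] with x hAx hpx
  exact (A x).le_of_opNorm_le_of_le hAx hpx

lemma norm_integral_apply_sub_integral_apply_le {B T : Type*} [NormedAddCommGroup B]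
    [NormedAddCommGroup T] {A : B → α → V →L[ℝ] W} {Λ Δ : α → ℝ} {cΛ cΔ : ℝ}
    (hAm : ∀ β, AEStronglyMeasurable (A β) μ) (hA : ∀ β, ∀ᵐ x ∂μ, ‖A β x‖ ≤ Λ x)
    (hA_sub : ∀ β β', ∀ᵐ x ∂μ, ‖A β x - A β' x‖ ≤ Δ x * ‖β - β'‖)
    (hΛ : SecondMomentLE μ Λ cΛ) (hΔ : SecondMomentLE μ Δ cΔ)
    {w : B → T → α → V} {P : B → T → α → ℝ} {a b : α → ℝ} {cP ca cb : ℝ}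
    (hwm : ∀ β θ, AEStronglyMeasurable (w β θ) μ) (hw : ∀ β θ, ∀ᵐ x ∂μ, ‖w β θ x‖ ≤ P β θ x)
    (hw_sub : ∀ β β' θ θ', ∀ᵐ x ∂μ,
      ‖w β θ x - w β' θ' x‖ ≤ a x * ‖β - β'‖ + b x * ‖θ - θ'‖)
    (hP : ∀ β θ, SecondMomentLE μ (P β θ) cP) (ha : SecondMomentLE μ a ca)
    (hb : SecondMomentLE μ b cb)
    (u v : B) (s t : T) :
    ‖∫ x, A u x (w u s x) ∂μ - ∫ x, A v x (w v t x) ∂μ‖ ≤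
      (cΔ * cP + cΛ * ca) * ‖u - v‖ + cΛ * cb * ‖s - t‖ := by
  have hint : ∀ β θ, Integrable (fun x => A β x (w β θ x)) μ := fun β θ =>
    integrable_apply_of_norm_le (hAm β) (hwm β θ) (hA β) (hw β θ) (hΛ.integrable_mul (hP β θ))
  have hΔP := hΔ.integrable_mul (hP u s)
  have hΛa := hΛ.integrable_mul ha
  have hΛb := hΛ.integrable_mul hb
  have hΔPa : Integrable (fun x => ‖u - v‖ * (Δ x * P u s x) + ‖u - v‖ * (Λ x * a x)) μ :=
    (hΔP.const_mul _).add (hΛa.const_mul _)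
  have hbound : Integrable (fun x => ‖u - v‖ * (Δ x * P u s x) + ‖u - v‖ * (Λ x * a x)
      + ‖s - t‖ * (Λ x * b x)) μ := hΔPa.add (hΛb.const_mul _)
  rw [← integral_sub (hint u s) (hint v t)]
  refine (norm_integral_le_of_norm_le hbound ?_).trans ?_
  · filter_upwards [hA_sub u v, hA v, hw u s, hw_sub u v s t] with x hAx hΛx hPx hwx
    have hsplit : A u x (w u s x) - A v x (w v t x) =
        (A u x - A v x) (w u s x) + A v x (w u s x - w v t x) := by
      simp only [map_sub, FunLike.coe_sub, Pi.sub_apply]; abel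
    calc ‖A u x (w u s x) - A v x (w v t x)‖
        ≤ Δ x * ‖u - v‖ * P u s x + Λ x * (a x * ‖u - v‖ + b x * ‖s - t‖) :=
          hsplit ▸ norm_add_le_of_le ((A u x - A v x).le_of_opNorm_le_of_le hAx hPx)
            ((A v x).le_of_opNorm_le_of_le hΛx hwx)
      _ = ‖u - v‖ * (Δ x * P u s x) + ‖u - v‖ * (Λ x * a x) + ‖s - t‖ * (Λ x * b x) := by
          ring
  · rw [integral_add hΔPa (hΛb.const_mul _), integral_add (hΔP.const_mul _) (hΛa.const_mul _),
      integral_const_mul, integral_const_mul, integral_const_mul]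
    have h₁ := mul_le_mul_of_nonneg_left (hΔ.integral_mul_le (hP u s)) (norm_nonneg (u - v))
    have h₂ := mul_le_mul_of_nonneg_left (hΛ.integral_mul_le ha) (norm_nonneg (u - v))
    have h₃ := mul_le_mul_of_nonneg_left (hΛ.integral_mul_le hb) (norm_nonneg (s - t))
    linarith

end Bilinear

lemma norm_integral_sub_integral_le_of_norm_sub_le {Y G : Type*} [MeasurableSpace Y]
    [NormedAddCommGroup G] [NormedSpace ℝ G] {ν : Measure Y} {φ ψ : Y → G} {L : Y → ℝ} {r : ℝ}
    (hφ : Integrable φ ν) (hψ : Integrable ψ ν) (hL : Integrable L ν)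
    (h : ∀ y, ‖φ y - ψ y‖ ≤ L y * r) :
    ‖∫ y, φ y ∂ν - ∫ y, ψ y ∂ν‖ ≤ (∫ y, L y ∂ν) * r := by
  rw [← integral_sub hφ hψ, ← integral_mul_const]
  exact norm_integral_le_of_norm_le (hL.mul_const r) (ae_of_all _ h)

section ConditionalModel

variable {nX nY nb nf : ℕ} {μ : Measure (E nX)} [SFinite μ] {κ : Kernel (E nX) (E nY)}
  [IsSFiniteKernel κ] {f : E nX → E nY → E nb → E nf} {Lf Ldf : E nX × E nY → ℝ}

lemma ae_norm_DF_le (hLf : Integrable Lf (μ ⊗ₘ κ))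
    (hfB : ∀ x y (β : E nb), ‖tJac (f x y) β‖ ≤ Lf (x, y)) (β : E nb) :
    ∀ᵐ x ∂μ, ‖DF κ f x β‖ ≤ ∫ y, Lf (x, y) ∂κ x := by
  filter_upwards [hLf.ae_integrable_compProd] with x hx
  exact norm_integral_le_of_norm_le hx (ae_of_all _ fun y => hfB x y β)

lemma ae_norm_DF_sub_le
    (hDfm : ∀ β : E nb,
      AEStronglyMeasurable (fun z : E nX × E nY => tJac (f z.1 z.2) β) (μ ⊗ₘ κ))
    (hLf : Integrable Lf (μ ⊗ₘ κ)) (hLdf : Integrable Ldf (μ ⊗ₘ κ))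
    (hfB : ∀ x y (β : E nb), ‖tJac (f x y) β‖ ≤ Lf (x, y))
    (hfLip : ∀ x y (β β' : E nb), ‖tJac (f x y) β - tJac (f x y) β'‖ ≤ Ldf (x, y) * ‖β - β'‖)
    (u v : E nb) :
    ∀ᵐ x ∂μ, ‖DF κ f x u - DF κ f x v‖ ≤ (∫ y, Ldf (x, y) ∂κ x) * ‖u - v‖ := by
  have hslice : ∀ β, ∀ᵐ x ∂μ, Integrable (fun y => tJac (f x y) β) (κ x) := fun β => by
    filter_upwards [hLf.ae_integrable_compProd,
      (hDfm β).ae_of_compProd (f := fun x y => tJac (f x y) β)] with x hx hxm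
    exact hx.mono' hxm (ae_of_all _ fun y => hfB x y β)
  filter_upwards [hslice u, hslice v, hLdf.ae_integrable_compProd] with x hu hv hx
  exact norm_integral_sub_integral_le_of_norm_sub_le hu hv hx fun y => hfLip x y u v

lemma ae_norm_condF_sub_le
    (hf : ∀ β : E nb, Integrable (fun z : E nX × E nY => f z.1 z.2 β) (μ ⊗ₘ κ))
    (hfd : ∀ x y, Differentiable ℝ (f x y)) (hLf : Integrable Lf (μ ⊗ₘ κ))
    (hfB : ∀ x y (β : E nb), ‖tJac (f x y) β‖ ≤ Lf (x, y)) (u v : E nb) :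
    ∀ᵐ x ∂μ, ‖condF κ f x u - condF κ f x v‖ ≤ (∫ y, Lf (x, y) ∂κ x) * ‖u - v‖ := by
  filter_upwards [(hf u).ae_integrable_compProd, (hf v).ae_integrable_compProd,
    hLf.ae_integrable_compProd] with x hu hv hx
  exact norm_integral_sub_integral_le_of_norm_sub_le hu hv hx fun y =>
    norm_sub_le_of_norm_tJac_le (hfd x y) (hfB x y) u v

end ConditionalModel

structure ConditionalModelBounds {nX nY nb nf : ℕ} (μ : Measure (E nX))
    (κ : Kernel (E nX) (E nY)) (f : E nX → E nY → E nb → E nf) (Λ Δ : E nX → ℝ)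
    (m : E nb → E nX → ℝ) (Lbf Lbdf Cf : ℝ) : Prop where
  aestronglyMeasurable_DF : ∀ β, AEStronglyMeasurable (fun x => DF κ f x β) μ
  aestronglyMeasurable_condF : ∀ β, AEStronglyMeasurable (fun x => condF κ f x β) μ
  norm_DF_le : ∀ β, ∀ᵐ x ∂μ, ‖DF κ f x β‖ ≤ Λ x
  norm_DF_sub_le : ∀ β β', ∀ᵐ x ∂μ, ‖DF κ f x β - DF κ f x β'‖ ≤ Δ x * ‖β - β'‖
  norm_condF_le : ∀ β, ∀ᵐ x ∂μ, ‖condF κ f x β‖ ≤ m β x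
  norm_condF_sub_le : ∀ β β', ∀ᵐ x ∂μ, ‖condF κ f x β - condF κ f x β'‖ ≤ Λ x * ‖β - β'‖
  secondMoment_Λ : SecondMomentLE μ Λ Lbf
  secondMoment_Δ : SecondMomentLE μ Δ Lbdf
  secondMoment_m : ∀ β, SecondMomentLE μ (m β) Cf

namespace ConditionalModelBounds

variable {nX nY nb nf : ℕ} {μ : Measure (E nX)} {κ : Kernel (E nX) (E nY)}
  {f : E nX → E nY → E nb → E nf}

lemma of_secondMomentLE [IsFiniteMeasure μ] [IsMarkovKernel κ] {Lf Ldf : E nX × E nY → ℝ} {Lbf Lbdf Cf : ℝ}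
    (hfm : ∀ β : E nb, AEStronglyMeasurable (fun z : E nX × E nY => f z.1 z.2 β) (μ ⊗ₘ κ))
    (hfd : ∀ x y, Differentiable ℝ (f x y))
    (hDfm : ∀ β : E nb,
      AEStronglyMeasurable (fun z : E nX × E nY => tJac (f z.1 z.2) β) (μ ⊗ₘ κ))
    (hfB : ∀ x y (β : E nb), ‖tJac (f x y) β‖ ≤ Lf (x, y))
    (hfLip : ∀ x y (β β' : E nb), ‖tJac (f x y) β - tJac (f x y) β'‖ ≤ Ldf (x, y) * ‖β - β'‖)
    (hLf : SecondMomentLE (μ ⊗ₘ κ) Lf Lbf) (hLdf : SecondMomentLE (μ ⊗ₘ κ) Ldf Lbdf)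
    (hf : ∀ β : E nb, SecondMomentLE (μ ⊗ₘ κ) (fun z => ‖f z.1 z.2 β‖) Cf) :
    ConditionalModelBounds μ κ f (fun x => ∫ y, Lf (x, y) ∂κ x)
      (fun x => ∫ y, Ldf (x, y) ∂κ x) (fun β x => ∫ y, ‖f x y β‖ ∂κ x) Lbf Lbdf Cf where
  aestronglyMeasurable_DF β := (hDfm β).integral_measure_compProd
  aestronglyMeasurable_condF β := (hfm β).integral_measure_compProd
  norm_DF_le := ae_norm_DF_le hLf.integrable hfB
  norm_DF_sub_le := ae_norm_DF_sub_le hDfm hLf.integrable hLdf.integrable hfB hfLip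
  norm_condF_le _ := ae_of_all _ fun _ => norm_integral_le_integral_norm _
  norm_condF_sub_le := ae_norm_condF_sub_le
    (fun β => (integrable_norm_iff (hfm β)).1 (hf β).integrable) hfd hLf.integrable hfB
  secondMoment_Λ := hLf.integral_kernel
  secondMoment_Δ := hLdf.integral_kernel
  secondMoment_m β := (hf β).integral_kernel

variable {Λ Δ : E nX → ℝ} {m : E nb → E nX → ℝ} {Lbf Lbdf Cf : ℝ}
  {g : E nf → ℝ} {Lg Ldg : ℝ}

lemma norm_gradG_sub_le [IsProbabilityMeasure μ] (hM : ConditionalModelBounds μ κ f Λ Δ m Lbf Lbdf Cf)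
    (hg2 : ContDiff ℝ 2 g) (hgB : ∀ p, ‖gradient g p‖ ≤ Lg)
    (hgH : ∀ p, ‖fderiv ℝ (gradient g) p‖ ≤ Ldg) (u v : E nb) :
    ‖gradG μ κ f g u - gradG μ κ f g v‖ ≤ (Lbdf * Lg + Lbf * (Ldg * Lbf)) * ‖u - v‖ := by
  have hLg : 0 ≤ Lg := (norm_nonneg _).trans (hgB 0)
  have hLdg : 0 ≤ Ldg := (norm_nonneg _).trans (hgH 0)
  have key := norm_integral_apply_sub_integral_apply_le (T := ℝ)
    (w := fun β _ x => gradient g (condF κ f x β)) (P := fun _ _ _ => Lg) (b := fun _ => 0)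
    hM.aestronglyMeasurable_DF hM.norm_DF_le hM.norm_DF_sub_le hM.secondMoment_Λ
    hM.secondMoment_Δ
    (fun β _ => hg2.differentiable_gradient.continuous.comp_aestronglyMeasurable
      (hM.aestronglyMeasurable_condF β))
    (fun _ _ => ae_of_all _ fun _ => hgB _)
    (fun β β' _ _ => (hM.norm_condF_sub_le β β').mono fun x hx => by
      rw [zero_mul, add_zero, mul_assoc]
      exact (norm_gradient_sub_le hg2 hgH _ _).trans (mul_le_mul_of_nonneg_left hx hLdg))
    (fun _ _ => SecondMomentLE.const hLg) (hM.secondMoment_Λ.const_mul hLdg)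
    (SecondMomentLE.const le_rfl) u v 0 0
  simpa only [gradG, mul_zero, zero_mul, add_zero] using key

lemma norm_gradientGap_sub_le [IsProbabilityMeasure μ] {T : Type*} [NormedAddCommGroup T] {Ψ : E nX → T → E nf}
    {LΨ : E nX → ℝ} {LbΨ : ℝ} (hM : ConditionalModelBounds μ κ f Λ Δ m Lbf Lbdf Cf)
    (hΨm : ∀ θ, AEStronglyMeasurable (fun x => Ψ x θ) μ)
    (hΨ_sub : ∀ x θ θ', ‖Ψ x θ - Ψ x θ'‖ ≤ LΨ x * ‖θ - θ'‖) (hLΨ : SecondMomentLE μ LΨ LbΨ)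
    (hg2 : ContDiff ℝ 2 g) (hgB : ∀ p, ‖gradient g p‖ ≤ Lg)
    (hgH : ∀ p, ‖fderiv ℝ (gradient g) p‖ ≤ Ldg) (u v : E nb) (s t : T) :
    ‖∫ x, DF κ f x u (gradient g (condF κ f x u) - gradient g (Ψ x s)) ∂μ
        - ∫ x, DF κ f x v (gradient g (condF κ f x v) - gradient g (Ψ x t)) ∂μ‖ ≤
      (Lbdf * (Lg + Lg) + Lbf * (Ldg * Lbf)) * ‖u - v‖ + Lbf * (Ldg * LbΨ) * ‖s - t‖ := by
  have hLg : 0 ≤ Lg := (norm_nonneg _).trans (hgB 0)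
  have hLdg : 0 ≤ Ldg := (norm_nonneg _).trans (hgH 0)
  have hgc := hg2.differentiable_gradient.continuous
  refine norm_integral_apply_sub_integral_apply_le
    (w := fun β θ x => gradient g (condF κ f x β) - gradient g (Ψ x θ))
    (P := fun _ _ _ => Lg + Lg) hM.aestronglyMeasurable_DF hM.norm_DF_le hM.norm_DF_sub_le
    hM.secondMoment_Λ hM.secondMoment_Δ
    (fun β θ => (hgc.comp_aestronglyMeasurable (hM.aestronglyMeasurable_condF β)).sub
      (hgc.comp_aestronglyMeasurable (hΨm θ)))
    (fun _ _ => ae_of_all _ fun _ => norm_sub_le_of_le (hgB _) (hgB _))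
    (fun β β' θ θ' => (hM.norm_condF_sub_le β β').mono fun x hx => ?_)
    (fun _ _ => SecondMomentLE.const (add_nonneg hLg hLg)) (hM.secondMoment_Λ.const_mul hLdg)
    (hLΨ.const_mul hLdg) u v s t
  rw [sub_sub_sub_comm, mul_assoc, mul_assoc]
  exact norm_sub_le_of_le
    ((norm_gradient_sub_le hg2 hgH _ _).trans (mul_le_mul_of_nonneg_left hx hLdg))
    ((norm_gradient_sub_le hg2 hgH _ _).trans (mul_le_mul_of_nonneg_left (hΨ_sub x θ θ') hLdg))

lemma norm_residual_sub_le {T : Type*} [NormedAddCommGroup T] {Ψ : E nX → T → E nf}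
    {LΨ : E nX → ℝ} {LbΨ CΨ : ℝ} (hM : ConditionalModelBounds μ κ f Λ Δ m Lbf Lbdf Cf)
    (hΨm : ∀ θ, AEStronglyMeasurable (fun x => Ψ x θ) μ)
    (hΨ_sub : ∀ x θ θ', ‖Ψ x θ - Ψ x θ'‖ ≤ LΨ x * ‖θ - θ'‖) (hLΨ : SecondMomentLE μ LΨ LbΨ)
    (hΨ : ∀ θ, SecondMomentLE μ (fun x => ‖Ψ x θ‖) CΨ) (u v : E nb) (s t : T) :
    ‖∫ x, DF κ f x u (condF κ f x u - Ψ x s) ∂μ - ∫ x, DF κ f x v (condF κ f x v - Ψ x t) ∂μ‖ ≤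
      (Lbdf * (Cf + CΨ) + Lbf * Lbf) * ‖u - v‖ + Lbf * LbΨ * ‖s - t‖ :=
  norm_integral_apply_sub_integral_apply_le (w := fun β θ x => condF κ f x β - Ψ x θ)
    (P := fun β θ x => m β x + ‖Ψ x θ‖) hM.aestronglyMeasurable_DF hM.norm_DF_le
    hM.norm_DF_sub_le hM.secondMoment_Λ hM.secondMoment_Δ
    (fun β θ => (hM.aestronglyMeasurable_condF β).sub (hΨm θ))
    (fun β θ => (hM.norm_condF_le β).mono fun x hx => norm_sub_le_of_le hx le_rfl)
    (fun β β' θ θ' => (hM.norm_condF_sub_le β β').mono fun x hx => by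
      rw [sub_sub_sub_comm]; exact norm_sub_le_of_le hx (hΨ_sub x θ θ'))
    (fun β θ => (hM.secondMoment_m β).add (hΨ θ)) hM.secondMoment_Λ hLΨ u v s t

end ConditionalModelBounds

lemma mul_add_mul_le_add_mul_sqrt {a b : ℝ} (ha : 0 ≤ a) (hb : 0 ≤ b) (r ρ : ℝ) :
    a * r + b * ρ ≤ (a + b) * √(r ^ 2 + ρ ^ 2) := by
  have hr : r ≤ √(r ^ 2 + ρ ^ 2) := Real.le_sqrt_of_sq_le (by nlinarith [sq_nonneg ρ])
  have hρ : ρ ≤ √(r ^ 2 + ρ ^ 2) := Real.le_sqrt_of_sq_le (by nlinarith [sq_nonneg r])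
  nlinarith [mul_le_mul_of_nonneg_left hr ha, mul_le_mul_of_nonneg_left hρ hb]

lemma norm_Dbeta_sub_le {nX nY nb nt nf : ℕ} {μ : Measure (E nX)} {κ : Kernel (E nX) (E nY)}
    {f : E nX → E nY → E nb → E nf} {Ψ : E nX → E nt → E nf} {g : E nf → ℝ} {lam : ℝ}
    (hlam : 0 ≤ lam) {u v : E nb} {s t : E nt} {c₁ c₂ d₂ c₃ d₃ : ℝ}
    (h₁ : ‖gradG μ κ f g u - gradG μ κ f g v‖ ≤ c₁ * ‖u - v‖)
    (h₂ : ‖∫ x, DF κ f x u (gradient g (condF κ f x u) - gradient g (Ψ x s)) ∂μ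
        - ∫ x, DF κ f x v (gradient g (condF κ f x v) - gradient g (Ψ x t)) ∂μ‖ ≤
      c₂ * ‖u - v‖ + d₂ * ‖s - t‖)
    (h₃ : ‖∫ x, DF κ f x u (condF κ f x u - Ψ x s) ∂μ
        - ∫ x, DF κ f x v (condF κ f x v - Ψ x t) ∂μ‖ ≤ c₃ * ‖u - v‖ + d₃ * ‖s - t‖)
    (hc₁ : 0 ≤ c₁) (hc₂ : 0 ≤ c₂) (hd₂ : 0 ≤ d₂) (hc₃ : 0 ≤ c₃) (hd₃ : 0 ≤ d₃) :
    ‖Dbeta μ κ f Ψ g lam u s - Dbeta μ κ f Ψ g lam v t‖ ≤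
      (c₁ + (c₂ + d₂) + lam * (c₃ + d₃)) * √(‖u - v‖ ^ 2 + ‖s - t‖ ^ 2) := by
  rw [Dbeta, Dbeta, add_sub_add_comm, add_sub_add_comm, ← smul_sub]
  have h₃' : ‖lam • (∫ x, DF κ f x u (condF κ f x u - Ψ x s) ∂μ
      - ∫ x, DF κ f x v (condF κ f x v - Ψ x t) ∂μ)‖ ≤ lam * (c₃ * ‖u - v‖ + d₃ * ‖s - t‖) := by
    rw [norm_smul, Real.norm_of_nonneg hlam]
    exact mul_le_mul_of_nonneg_left h₃ hlam
  calc _ ≤ c₁ * ‖u - v‖ + (c₂ * ‖u - v‖ + d₂ * ‖s - t‖) + lam * (c₃ * ‖u - v‖ + d₃ * ‖s - t‖) :=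
        norm_add₃_le.trans (add_le_add_three h₁ h₂ h₃')
    _ = (c₁ + c₂ + lam * c₃) * ‖u - v‖ + (d₂ + lam * d₃) * ‖s - t‖ := by ring
    _ ≤ (c₁ + c₂ + lam * c₃ + (d₂ + lam * d₃)) * √(‖u - v‖ ^ 2 + ‖s - t‖ ^ 2) :=
        mul_add_mul_le_add_mul_sqrt (by positivity) (by positivity) _ _
    _ = _ := by ring

theorem statement13_general {nX nY nb nt nf : ℕ}
    (μ : Measure (E nX)) [IsProbabilityMeasure μ]
    (κ : Kernel (E nX) (E nY)) [IsMarkovKernel κ]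
    (f : E nX → E nY → E nb → E nf)
    (hfm : Measurable (fun q : (E nX × E nY) × E nb => f q.1.1 q.1.2 q.2))
    (hfd : ∀ x y, Differentiable ℝ (f x y))
    (hDfm : ∀ β : E nb,
      AEStronglyMeasurable (fun z : E nX × E nY => tJac (f z.1 z.2) β) (μ ⊗ₘ κ))
    (Ψ : E nX → E nt → E nf)
    (hΨm : Measurable (fun q : E nX × E nt => Ψ q.1 q.2))
    (hΨd : ∀ x, Differentiable ℝ (Ψ x))
    -- Assumption (A1)
    (g : E nf → ℝ) (Lg Ldg : ℝ) (hg2 : ContDiff ℝ 2 g)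
    (hgB : ∀ u : E nf, ‖gradient g u‖ ≤ Lg)
    (hgH : ∀ u : E nf, ‖fderiv ℝ (gradient g) u‖ ≤ Ldg)
    -- Assumption (A2)
    (Lf Ldf : E nX × E nY → ℝ) (Lbf Lbdf Cf : ℝ)
    (hLfm : Measurable Lf) (hLdfm : Measurable Ldf)
    (hLdf0 : ∀ z, 0 ≤ Ldf z)
    (hLbf : 0 < Lbf) (hLbdf : 0 < Lbdf) (hCf : 0 < Cf)
    (hfB : ∀ x y (β : E nb), ‖tJac (f x y) β‖ ≤ Lf (x, y))
    (hfLip : ∀ x y (β β' : E nb),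
      ‖tJac (f x y) β - tJac (f x y) β'‖ ≤ Ldf (x, y) * ‖β - β'‖)
    (hMomf : ∀ p ∈ ({2, 4} : Set ℕ),
      (Integrable (fun z => Lf z ^ p) (μ ⊗ₘ κ) ∧ ∫ z, Lf z ^ p ∂(μ ⊗ₘ κ) ≤ Lbf ^ p) ∧
      (∀ β : E nb, Integrable (fun z : E nX × E nY => ‖f z.1 z.2 β‖ ^ p) (μ ⊗ₘ κ) ∧
          ∫ z : E nX × E nY, ‖f z.1 z.2 β‖ ^ p ∂(μ ⊗ₘ κ) ≤ Cf ^ p) ∧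
      (Integrable (fun z => Ldf z ^ p) (μ ⊗ₘ κ) ∧ ∫ z, Ldf z ^ p ∂(μ ⊗ₘ κ) ≤ Lbdf ^ p))
    -- Assumption (A3)
    (LΨ LdΨ : E nX → ℝ) (LbΨ LbdΨ CΨ : ℝ)
    (hLΨm : Measurable LΨ)
    (hLbΨ : 0 < LbΨ) (hCΨ : 0 < CΨ)
    (hΨB : ∀ x (θ : E nt), ‖tJac (Ψ x) θ‖ ≤ LΨ x)
    (hMomΨ : ∀ p ∈ ({2, 4} : Set ℕ),
      (Integrable (fun x => LΨ x ^ p) μ ∧ ∫ x, LΨ x ^ p ∂μ ≤ LbΨ ^ p) ∧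
      (∀ θ : E nt, Integrable (fun x => ‖Ψ x θ‖ ^ p) μ ∧ ∫ x, ‖Ψ x θ‖ ^ p ∂μ ≤ CΨ ^ p) ∧
      (Integrable (fun x => LdΨ x ^ p) μ ∧ ∫ x, LdΨ x ^ p ∂μ ≤ LbdΨ ^ p))

    (lam : ℝ) (hlam : 0 ≤ lam) :
    ∀ (u v : E nb) (s t : E nt),
      ‖Dbeta μ κ f Ψ g lam u s - Dbeta μ κ f Ψ g lam v t‖ ≤
        (Lbf ^ 2 * Ldg + Lg * Lbdf
          + (Lbf ^ 2 * Ldg + 2 * Lg * Lbdf + Lbf * Ldg * LbΨ)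
          + lam * (Lbf ^ 2 + Lbdf * Cf + Lbdf * CΨ + Lbf * LbΨ)) *
        Real.sqrt (‖u - v‖ ^ 2 + ‖s - t‖ ^ 2) := by
  intro u v s t
  obtain ⟨⟨hLf2, hLf2_le⟩, hf2, ⟨hLdf2, hLdf2_le⟩⟩ := hMomf 2 (by simp)
  obtain ⟨⟨hLΨ2, hLΨ2_le⟩, hΨ2, -⟩ := hMomΨ 2 (by simp)
  have hfβm (β : E nb) : AEStronglyMeasurable (fun z : E nX × E nY => f z.1 z.2 β) (μ ⊗ₘ κ) :=
    (hfm.comp (measurable_id.prodMk measurable_const)).aestronglyMeasurable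
  have hΨθm (θ : E nt) : AEStronglyMeasurable (fun x => Ψ x θ) μ :=
    (hΨm.comp (measurable_id.prodMk measurable_const)).aestronglyMeasurable
  have hM := ConditionalModelBounds.of_secondMomentLE hfβm hfd hDfm hfB hfLip
    ⟨hLbf.le, fun z => (norm_nonneg _).trans (hfB z.1 z.2 0), hLfm.aestronglyMeasurable, hLf2,
      hLf2_le⟩
    ⟨hLbdf.le, hLdf0, hLdfm.aestronglyMeasurable, hLdf2, hLdf2_le⟩
    fun β => ⟨hCf.le, fun _ => norm_nonneg _, (hfβm β).norm, (hf2 β).1, (hf2 β).2⟩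
  have hLΨ : SecondMomentLE μ LΨ LbΨ :=
    ⟨hLbΨ.le, fun x => (norm_nonneg _).trans (hΨB x 0), hLΨm.aestronglyMeasurable, hLΨ2, hLΨ2_le⟩
  have hΨ (θ : E nt) : SecondMomentLE μ (fun x => ‖Ψ x θ‖) CΨ :=
    ⟨hCΨ.le, fun _ => norm_nonneg _, (hΨθm θ).norm, (hΨ2 θ).1, (hΨ2 θ).2⟩
  have hΨ_sub (x : E nX) := norm_sub_le_of_norm_tJac_le (hΨd x) (hΨB x)
  have hLg : 0 ≤ Lg := (norm_nonneg _).trans (hgB 0)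
  have hLdg : 0 ≤ Ldg := (norm_nonneg _).trans (hgH 0)
  refine (norm_Dbeta_sub_le hlam (hM.norm_gradG_sub_le hg2 hgB hgH u v)
    (hM.norm_gradientGap_sub_le hΨθm hΨ_sub hLΨ hg2 hgB hgH u v s t)
    (hM.norm_residual_sub_le hΨθm hΨ_sub hLΨ hΨ u v s t)
    (by positivity) (by positivity) (by positivity) (by positivity) (by positivity)).trans_eq ?_
  ring

/-- (β-part of the Appendix proof of Lemma 4.4 of the paper: Lipschitz
continuity of the β-gradient of the Lyapunov function, under (A1), (A2), (A3)),
with the Euclidean norm `√(‖u−v‖² + ‖s−t‖²)` on the product space. -/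
theorem statement13 {nX nY nb nt nf : ℕ}
    (μ : Measure (E nX)) [IsProbabilityMeasure μ]
    (κ : Kernel (E nX) (E nY)) [IsMarkovKernel κ]
    (f : E nX → E nY → E nb → E nf)
    (hfm : Measurable (fun q : (E nX × E nY) × E nb => f q.1.1 q.1.2 q.2))
    (hfd : ∀ x y, Differentiable ℝ (f x y))
    (hDfm : ∀ β : E nb,
      AEStronglyMeasurable (fun z : E nX × E nY => tJac (f z.1 z.2) β) (μ ⊗ₘ κ))
    (Ψ : E nX → E nt → E nf)
    (hΨm : Measurable (fun q : E nX × E nt => Ψ q.1 q.2))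
    (hΨd : ∀ x, Differentiable ℝ (Ψ x))
    (hDΨm : ∀ θ : E nt, AEStronglyMeasurable (fun x => tJac (Ψ x) θ) μ)
    -- Assumption (A1)
    (g : E nf → ℝ) (Lg Ldg : ℝ) (hLg : 0 < Lg) (hLdg : 0 < Ldg)
    (hgconv : ConvexOn ℝ Set.univ g) (hg2 : ContDiff ℝ 2 g)
    (hgB : ∀ u : E nf, ‖gradient g u‖ ≤ Lg)
    (hgH : ∀ u : E nf, ‖fderiv ℝ (gradient g) u‖ ≤ Ldg)
    -- Assumption (A2)
    (Lf Ldf : E nX × E nY → ℝ) (Lbf Lbdf Cf : ℝ)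
    (hLfm : Measurable Lf) (hLdfm : Measurable Ldf)
    (hLf0 : ∀ z, 0 ≤ Lf z) (hLdf0 : ∀ z, 0 ≤ Ldf z)
    (hLbf : 0 < Lbf) (hLbdf : 0 < Lbdf) (hCf : 0 < Cf)
    (hfB : ∀ x y (β : E nb), ‖tJac (f x y) β‖ ≤ Lf (x, y))
    (hfLip : ∀ x y (β β' : E nb),
      ‖tJac (f x y) β - tJac (f x y) β'‖ ≤ Ldf (x, y) * ‖β - β'‖)
    (hMomf : ∀ p ∈ ({2, 4} : Set ℕ),
      (Integrable (fun z => Lf z ^ p) (μ ⊗ₘ κ) ∧ ∫ z, Lf z ^ p ∂(μ ⊗ₘ κ) ≤ Lbf ^ p) ∧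
      (∀ β : E nb, Integrable (fun z : E nX × E nY => ‖f z.1 z.2 β‖ ^ p) (μ ⊗ₘ κ) ∧
          ∫ z : E nX × E nY, ‖f z.1 z.2 β‖ ^ p ∂(μ ⊗ₘ κ) ≤ Cf ^ p) ∧
      (Integrable (fun z => Ldf z ^ p) (μ ⊗ₘ κ) ∧ ∫ z, Ldf z ^ p ∂(μ ⊗ₘ κ) ≤ Lbdf ^ p))
    -- Assumption (A3)
    (LΨ LdΨ : E nX → ℝ) (LbΨ LbdΨ CΨ : ℝ)
    (hLΨm : Measurable LΨ) (hLdΨm : Measurable LdΨ)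
    (hLΨ0 : ∀ x, 0 ≤ LΨ x) (hLdΨ0 : ∀ x, 0 ≤ LdΨ x)
    (hLbΨ : 0 < LbΨ) (hLbdΨ : 0 < LbdΨ) (hCΨ : 0 < CΨ)
    (hΨB : ∀ x (θ : E nt), ‖tJac (Ψ x) θ‖ ≤ LΨ x)
    (hΨLip : ∀ x (θ θ' : E nt),
      ‖tJac (Ψ x) θ - tJac (Ψ x) θ'‖ ≤ LdΨ x * ‖θ - θ'‖)
    (hMomΨ : ∀ p ∈ ({2, 4} : Set ℕ),
      (Integrable (fun x => LΨ x ^ p) μ ∧ ∫ x, LΨ x ^ p ∂μ ≤ LbΨ ^ p) ∧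
      (∀ θ : E nt, Integrable (fun x => ‖Ψ x θ‖ ^ p) μ ∧ ∫ x, ‖Ψ x θ‖ ^ p ∂μ ≤ CΨ ^ p) ∧
      (Integrable (fun x => LdΨ x ^ p) μ ∧ ∫ x, LdΨ x ^ p ∂μ ≤ LbdΨ ^ p))

    (lam : ℝ) (hlam : 0 ≤ lam) :
    ∀ (u v : E nb) (s t : E nt),
      ‖Dbeta μ κ f Ψ g lam u s - Dbeta μ κ f Ψ g lam v t‖ ≤
        (Lbf ^ 2 * Ldg + Lg * Lbdf
          + (Lbf ^ 2 * Ldg + 2 * Lg * Lbdf + Lbf * Ldg * LbΨ)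
          + lam * (Lbf ^ 2 + Lbdf * Cf + Lbdf * CΨ + Lbf * LbΨ)) *
        Real.sqrt (‖u - v‖ ^ 2 + ‖s - t‖ ^ 2) :=
  statement13_general μ κ f hfm hfd hDfm Ψ hΨm hΨd g Lg Ldg hg2 hgB hgH Lf Ldf Lbf Lbdf Cf hLfm
    hLdfm hLdf0 hLbf hLbdf hCf hfB hfLip hMomf LΨ LdΨ LbΨ LbdΨ CΨ hLΨm hLbΨ hCΨ hΨB hMomΨ lam hlam
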